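/- For every non-negative integer n and every integer s, ∑_{k=0}^{n} C(2n, 2k) * 5^k * F(6k+s) = 2^(2n-1) * (4^n * F(4n+s) + F(6n+s)); equivalently, 2 * ∑_{k=0}^{n} C(2n, 2k) * 5^k * F(6k+s) = 4^n * (4^n * F(4n+s) + F(6n+s)). -/

import Mathlib

/-!
Let `x` be a root of `x² = x + 1` and `u = (2x - 1)x³`, so that `u² = 5x⁶`, `1 + u = 4x²` and
`1 - u = -2x³`. The even part of the binomial expansion of `(1 ± u)^(2n)` then gives
`2 ∑ C(2n,2k) 5ᵏ x^(6k) = 16ⁿ x^(4n) + 4ⁿ x^(6n)`; taking `x` the root of `X² - X - 1` in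
`AdjoinRoot`, the corresponding polynomial is a multiple of `X² - X - 1`. A sequence satisfying the
Fibonacci recurrence, read as the linear functional `Xⁱ ↦ F (i + s)`, kills such multiples.
-/

open Finset Polynomial

theorem Finset.sum_range_two_mul {M : Type*} [AddCommMonoid M] (g : ℕ → M) (n : ℕ) :
    ∑ j ∈ range (2 * n), g j = ∑ k ∈ range n, (g (2 * k) + g (2 * k + 1)) := by
  induction n with
  | zero => simp
  | succ n ih => rw [Nat.mul_succ, sum_range_succ, sum_range_succ, sum_range_succ, ih, add_assoc]

theorem add_pow_two_mul_add_sub_pow_two_mul {R : Type*} [CommRing R] (u : R) (n : ℕ) :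
    (1 + u) ^ (2 * n) + (1 - u) ^ (2 * n)
      = 2 * ∑ k ∈ range (n + 1), ((2 * n).choose (2 * k) : R) * u ^ (2 * k) := by
  have hodd (k : ℕ) : (-u) ^ (2 * k + 1) = -u ^ (2 * k + 1) := (odd_two_mul_add_one k).neg_pow u
  rw [sub_eq_add_neg, add_comm 1 u, add_comm 1 (-u), add_pow, add_pow, ← sum_add_distrib,
    sum_range_succ, sum_range_two_mul, mul_sum, sum_range_succ]
  simp only [(even_two_mul _).neg_pow, hodd, one_pow, mul_one]
  congr 1
  · exact sum_congr rfl fun k _ => by ring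
  · ring

theorem two_mul_sum_choose_mul_five_pow_mul_pow_six {R : Type*} [CommRing R] {x : R}
    (hx : x ^ 2 = x + 1) (n : ℕ) :
    2 * ∑ k ∈ range (n + 1), ((2 * n).choose (2 * k) : R) * 5 ^ k * x ^ (6 * k)
      = 16 ^ n * x ^ (4 * n) + 4 ^ n * x ^ (6 * n) := by
  set u := (2 * x - 1) * x ^ 3
  have hu : u ^ 2 = 5 * x ^ 6 := by linear_combination 4 * x ^ 6 * hx
  have hplus : 1 + u = 4 * x ^ 2 := by linear_combination (2 * x ^ 2 + x - 1) * hx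
  have hminus : 1 - u = -2 * x ^ 3 := by linear_combination (-2 * x ^ 2 + x - 1) * hx
  calc 2 * ∑ k ∈ range (n + 1), ((2 * n).choose (2 * k) : R) * 5 ^ k * x ^ (6 * k)
      = 2 * ∑ k ∈ range (n + 1), ((2 * n).choose (2 * k) : R) * u ^ (2 * k) := by
        simp only [pow_mul, hu, mul_pow, mul_assoc]
    _ = (1 + u) ^ (2 * n) + (1 - u) ^ (2 * n) := (add_pow_two_mul_add_sub_pow_two_mul u n).symm
    _ = 16 ^ n * x ^ (4 * n) + 4 ^ n * x ^ (6 * n) := by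
        rw [hplus, hminus, mul_pow, mul_pow, ← pow_mul, ← pow_mul, pow_mul (4 : R),
          pow_mul (-2 : R)]
        norm_num
        ring_nf

namespace Polynomial

variable {R M : Type*} [CommRing R] [AddCommGroup M] [Module R M]

def evalSeq (G : ℤ → M) (s : ℤ) : R[X] →ₗ[R] M :=
  lsum fun i => LinearMap.toSpanSingleton R M (G (i + s))

@[simp]
theorem evalSeq_C_mul_X_pow (G : ℤ → M) (s : ℤ) (i : ℕ) (a : R) :
    evalSeq G s (C a * X ^ i) = a • G (i + s) := by
  simp [evalSeq, C_mul_X_pow_eq_monomial, sum_monomial_index]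

theorem evalSeq_X_sq_sub_X_sub_one_mul {G : ℤ → M} (hG : ∀ j, G j = G (j - 1) + G (j - 2))
    (s : ℤ) (q : R[X]) : evalSeq G s ((X ^ 2 - X - 1) * q) = 0 := by
  induction q using Polynomial.induction_on' with
  | add p q hp hq => rw [mul_add, map_add, hp, hq, add_zero]
  | monomial i a =>
    have hshift : (X ^ 2 - X - 1) * C a * X ^ i
        = C a * X ^ (i + 2) - C a * X ^ (i + 1) - C a * X ^ i := by ring
    rw [← C_mul_X_pow_eq_monomial, ← mul_assoc, hshift, map_sub, map_sub, evalSeq_C_mul_X_pow,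
      evalSeq_C_mul_X_pow, evalSeq_C_mul_X_pow, hG (↑(i + 2) + s)]
    push_cast
    rw [show (i : ℤ) + 2 + s - 1 = i + 1 + s by ring, show (i : ℤ) + 2 + s - 2 = i + s by ring,
      smul_add]
    abel

theorem evalSeq_eq_zero_of_dvd {G : ℤ → M} (hG : ∀ j, G j = G (j - 1) + G (j - 2)) (s : ℤ)
    {p : R[X]} (hp : X ^ 2 - X - 1 ∣ p) : evalSeq G s p = 0 := by
  obtain ⟨q, rfl⟩ := hp
  exact evalSeq_X_sq_sub_X_sub_one_mul hG s q

theorem X_sq_sub_X_sub_one_dvd_sum_choose (n : ℕ) :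
    X ^ 2 - X - 1 ∣ ∑ k ∈ range (n + 1), C (2 * (2 * n).choose (2 * k) * 5 ^ k : R) * X ^ (6 * k)
      - C (16 ^ n) * X ^ (4 * n) - C (4 ^ n) * X ^ (6 * n) := by
  rw [← AdjoinRoot.mk_eq_zero]
  have hroot : AdjoinRoot.root (X ^ 2 - X - 1 : R[X]) ^ 2 = AdjoinRoot.root _ + 1 := by
    have h := AdjoinRoot.mk_self (f := (X ^ 2 - X - 1 : R[X]))
    simp only [map_sub, map_pow, AdjoinRoot.mk_X, map_one] at h
    linear_combination h
  simp only [map_sub, map_sum, map_mul, map_pow, AdjoinRoot.mk_X, map_natCast, map_ofNat]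
  have key := two_mul_sum_choose_mul_five_pow_mul_pow_six hroot n
  simp only [mul_sum, ← mul_assoc] at key
  linear_combination key

end Polynomial

theorem stmt15_general (F : ℤ → ℤ)
    (hF : ∀ j : ℤ, F j = F (j - 1) + F (j - 2)) (n : ℕ) (s : ℤ) :
    2 * ∑ k ∈ Finset.range (n + 1), ((2 * n).choose (2 * k) : ℤ) * 5 ^ k * F (6 * (k : ℤ) + s)
      = 4 ^ n * (4 ^ n * F (4 * (n : ℤ) + s) + F (6 * (n : ℤ) + s)) := by
  have h := evalSeq_eq_zero_of_dvd hF s (X_sq_sub_X_sub_one_dvd_sum_choose (R := ℤ) n)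
  simp only [map_sub, map_sum, evalSeq_C_mul_X_pow, smul_eq_mul] at h
  push_cast at h
  have h16 : (16 : ℤ) ^ n = 4 ^ n * 4 ^ n := by rw [← mul_pow]; norm_num
  simp only [mul_sum, ← mul_assoc]
  linear_combination h + F (4 * n + s) * h16

theorem stmt15 (F : ℤ → ℤ) (hF0 : F 0 = 0) (hF1 : F 1 = 1)
    (hF : ∀ j : ℤ, F j = F (j - 1) + F (j - 2)) (n : ℕ) (s : ℤ) :
    2 * ∑ k ∈ Finset.range (n + 1), ((2 * n).choose (2 * k) : ℤ) * 5 ^ k * F (6 * (k : ℤ) + s)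
      = 4 ^ n * (4 ^ n * F (4 * (n : ℤ) + s) + F (6 * (n : ℤ) + s)) :=
  stmt15_general F hF n s
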